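/- Let 1 ≤ K ≤ N be integers with K ≥ 2, let q ∈ (0,1], ε > 0 and μ ∈ ℝ. Let X_1, X_2, … be i.i.d. N(μ, 1) random variables and X̄_s = s^{−1}Σ_{t=1}^s X_t. For K ≤ n ≤ N−1 set b_n = log(n / K^{1−q}) and let H_n be the event that X̄_s + √(2 b_n / s) ≤ μ − ε for some integer s ≥ 1. Then Σ_{n=K}^{N−1} P(H_n) ≤ 2·C₀·ε^{−2}·K^{1−q}·log N, where C₀ = sup_{y>0} y² e^{−y²/2} / (1 − e^{−y²/2}), and C₀ is finite. -/

import Mathlib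

open MeasureTheory ProbabilityTheory

open scoped ENNReal NNReal

/-- The set of values `y² e^{-y²/2} / (1 - e^{-y²/2})` for `y > 0`. -/
def C0Set : Set ℝ :=
    {x : ℝ | ∃ y : ℝ, 0 < y ∧
      x = y ^ 2 * Real.exp (-y ^ 2 / 2) / (1 - Real.exp (-y ^ 2 / 2))}

/-- `C₀ = sup_{y>0} y² e^{-y²/2} / (1 - e^{-y²/2})`. -/
noncomputable def C0 : ℝ := sSup C0Set

lemma C0Set_bddAbove' : BddAbove C0Set := by
  refine ⟨2, fun x hx => ?_⟩
  obtain ⟨y, hy, rfl⟩ := hx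
  have hu : 0 < y ^ 2 / 2 := by positivity
  have h1 : Real.exp (-y ^ 2 / 2) < 1 := by
    rw [Real.exp_lt_one_iff]; linarith
  have h2 : y ^ 2 / 2 + 1 ≤ Real.exp (y ^ 2 / 2) := by
    have := Real.add_one_le_exp (y ^ 2 / 2); linarith
  rw [div_le_iff₀ (by linarith)]
  have h3 : Real.exp (-y ^ 2 / 2) = (Real.exp (y ^ 2 / 2))⁻¹ := by
    rw [← Real.exp_neg]; ring_nf
  have hep : 0 < Real.exp (y ^ 2 / 2) := Real.exp_pos _
  rw [h3, ← sub_nonneg]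
  have key : (2 * (1 - (Real.exp (y ^ 2 / 2))⁻¹) - y ^ 2 * (Real.exp (y ^ 2 / 2))⁻¹)
      * Real.exp (y ^ 2 / 2) = 2 * Real.exp (y ^ 2 / 2) - 2 - y ^ 2 := by
    field_simp
  nlinarith [mul_pos hep hep]


section Aux
variable {Ω' : Type*} [MeasurableSpace Ω'] (P' : Measure Ω')

lemma gaussian_pdf_shift (m t x : ℝ) :
    Real.exp (t * x) * gaussianPDFReal m 1 x
      = Real.exp (m * t + t ^ 2 / 2) * gaussianPDFReal (m + t) 1 x := by
  simp only [gaussianPDFReal, NNReal.coe_one, mul_one]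
  rw [mul_left_comm, mul_left_comm (Real.exp (m * t + t ^ 2 / 2)), ← Real.exp_add, ← Real.exp_add]
  congr 1
  ring

lemma gaussian_integrable_exp (m t : ℝ) :
    Integrable (fun x => Real.exp (t * x)) (gaussianReal m 1) := by
  rw [gaussianReal_of_var_ne_zero _ one_ne_zero]
  have hd : (gaussianPDF m 1) = fun x => ((gaussianPDFReal m 1 x).toNNReal : ℝ≥0∞) := rfl
  rw [hd, integrable_withDensity_iff_integrable_coe_smul
    ((measurable_gaussianPDFReal m 1).real_toNNReal)]
  have : (fun x => ((gaussianPDFReal m 1 x).toNNReal : ℝ) • Real.exp (t * x))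
      = fun x => Real.exp (m * t + t ^ 2 / 2) * gaussianPDFReal (m + t) 1 x := by
    ext x
    rw [smul_eq_mul, Real.coe_toNNReal _ (gaussianPDFReal_nonneg m 1 x), mul_comm,
      gaussian_pdf_shift]
  rw [this]
  exact (integrable_gaussianPDFReal (m + t) 1).const_mul _

lemma gaussian_integral_exp (m t : ℝ) :
    ∫ x, Real.exp (t * x) ∂(gaussianReal m 1) = Real.exp (m * t + t ^ 2 / 2) := by
  rw [gaussianReal_of_var_ne_zero _ one_ne_zero]
  have hd : (gaussianPDF m 1) = fun x => ((gaussianPDFReal m 1 x).toNNReal : ℝ≥0∞) := rfl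
  rw [hd, integral_withDensity_eq_integral_smul
    ((measurable_gaussianPDFReal m 1).real_toNNReal)]
  have : (fun x => ((gaussianPDFReal m 1 x).toNNReal : ℝ≥0) • Real.exp (t * x))
      = fun x => Real.exp (m * t + t ^ 2 / 2) * gaussianPDFReal (m + t) 1 x := by
    ext x
    rw [NNReal.smul_def, smul_eq_mul, Real.coe_toNNReal _ (gaussianPDFReal_nonneg m 1 x),
      mul_comm, gaussian_pdf_shift]
  rw [this, integral_const_mul, integral_gaussianPDFReal_eq_one _ one_ne_zero, mul_one]

lemma integrable_exp_gaussian (Y : Ω' → ℝ) (hY : Measurable Y) (m : ℝ)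
    (h : Measure.map Y P' = gaussianReal m 1) (u : ℝ) :
    Integrable (fun ω => Real.exp (u * Y ω)) P' := by
  have h2 := gaussian_integrable_exp m u
  rw [← h] at h2
  exact (integrable_map_measure (Measurable.aestronglyMeasurable (by fun_prop))
    hY.aemeasurable).mp h2

lemma mgf_gaussian' (Y : Ω' → ℝ) (hY : Measurable Y) (m : ℝ)
    (h : Measure.map Y P' = gaussianReal m 1) (u : ℝ) :
    mgf Y P' u = Real.exp (m * u + u ^ 2 / 2) := by
  have : mgf Y P' u = ∫ ω, Real.exp (u * Y ω) ∂P' := rfl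
  rw [this, ← gaussian_integral_exp m u, ← h,
    integral_map hY.aemeasurable (Measurable.aestronglyMeasurable (by fun_prop))]

lemma harmonic_le {K : ℕ} (hK : 2 ≤ K) (M : ℕ) (hM : K - 1 ≤ M) :
    ∑ n ∈ Finset.Icc K M, (1 : ℝ) / n ≤ Real.log M := by
  induction M, hM using Nat.le_induction with
  | base =>
    rw [Finset.Icc_eq_empty (by omega)]
    simp only [Finset.sum_empty]
    apply Real.log_nonneg
    exact_mod_cast (by omega : 1 ≤ K - 1)
  | succ M hM ih =>
    rw [Finset.sum_Icc_succ_top (by omega : K ≤ M + 1)]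
    have hM1 : (1 : ℝ) ≤ (M : ℝ) := by exact_mod_cast (by omega : 1 ≤ M)
    have h0 : (0 : ℝ) < (M : ℝ) := by linarith
    have h1 : (0 : ℝ) < (M : ℝ) + 1 := by linarith
    have h2 : (M : ℝ) * Real.exp (1 / ((M : ℝ) + 1)) ≤ (M : ℝ) + 1 := by
      have he : -(1 / ((M : ℝ) + 1)) + 1 ≤ (Real.exp (1 / ((M : ℝ) + 1)))⁻¹ :=
        (Real.add_one_le_exp _).trans_eq (Real.exp_neg _)
      have hexp0 : 0 < Real.exp (1 / ((M : ℝ) + 1)) := Real.exp_pos _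
      have hmul : Real.exp (1 / ((M : ℝ) + 1)) * (Real.exp (1 / ((M : ℝ) + 1)))⁻¹ = 1 :=
        mul_inv_cancel₀ hexp0.ne'
      have hh : Real.exp (1 / ((M : ℝ) + 1)) * (-(1 / ((M : ℝ) + 1)) + 1) ≤ 1 :=
        (mul_le_mul_of_nonneg_left he hexp0.le).trans_eq hmul
      have hhh := mul_le_mul_of_nonneg_left hh h1.le
      have expand : ((M : ℝ) + 1) * (Real.exp (1 / ((M : ℝ) + 1))
          * (-(1 / ((M : ℝ) + 1)) + 1)) = (M : ℝ) * Real.exp (1 / ((M : ℝ) + 1)) := by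
        field_simp
        ring
      rw [expand, mul_one] at hhh
      exact hhh
    have h3 : Real.exp (1 / ((M : ℝ) + 1)) ≤ ((M : ℝ) + 1) / M := by
      rw [le_div_iff₀ h0]; linarith
    have h4 : 1 / ((M : ℝ) + 1) ≤ Real.log ((M : ℝ) + 1) - Real.log M := by
      rw [← Real.log_div (by linarith) (by linarith)]
      calc 1 / ((M : ℝ) + 1) = Real.log (Real.exp (1 / ((M : ℝ) + 1))) := (Real.log_exp _).symm
        _ ≤ Real.log (((M : ℝ) + 1) / M) := Real.log_le_log (Real.exp_pos _) h3
    push_cast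
    linarith

end Aux


theorem stmt_9 {Ω : Type*} [MeasurableSpace Ω] (P : Measure Ω) [IsProbabilityMeasure P]
    (K N : ℕ) (hK2 : 2 ≤ K) (hKN : K ≤ N)
    (q : ℝ) (hq : q ∈ Set.Ioc (0 : ℝ) 1) (ε : ℝ) (hε : 0 < ε) (μ : ℝ)
    (X : ℕ → Ω → ℝ) (hmeas : ∀ t, Measurable (X t))
    (hindep : iIndepFun X P)
    (hdist : ∀ t, Measure.map (X t) P = gaussianReal μ 1) :
    BddAbove C0Set ∧
    ∑ n ∈ Finset.Icc K (N - 1),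
        P {ω | ∃ s : ℕ, 1 ≤ s ∧
          (∑ t ∈ Finset.range s, X t ω) / s
            + Real.sqrt (2 * Real.log (n / (K : ℝ) ^ (1 - q)) / s) ≤ μ - ε}
      ≤ ENNReal.ofReal (2 * C0 * ε⁻¹ ^ 2 * (K : ℝ) ^ (1 - q) * Real.log N) := by
  obtain ⟨hq0, hq1⟩ := hq
  have hbdd : BddAbove C0Set := C0Set_bddAbove'
  refine ⟨hbdd, ?_⟩
  set ρ : ℝ := Real.exp (-ε ^ 2 / 2) with hρdef
  have hρ0 : 0 < ρ := Real.exp_pos _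
  have hρ1 : ρ < 1 := by
    rw [hρdef, Real.exp_lt_one_iff]
    have := pow_pos hε 2; linarith
  have h1ρ : (0:ℝ) < 1 - ρ := by linarith
  have hmem : ε ^ 2 * ρ / (1 - ρ) ∈ C0Set := ⟨ε, hε, by rw [hρdef]⟩
  have hC0ge : ε ^ 2 * ρ / (1 - ρ) ≤ C0 := le_csSup hbdd hmem
  have hC0pos : 0 < C0 := lt_of_lt_of_le (by positivity) hC0ge
  have hρdiv : ρ / (1 - ρ) ≤ C0 * ε⁻¹ ^ 2 := by
    have h1 : ρ / (1 - ρ) = ε ^ 2 * ρ / (1 - ρ) * ε⁻¹ ^ 2 := by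
      field_simp
    rw [h1]
    exact mul_le_mul_of_nonneg_right hC0ge (by positivity)
  have hgeosum : Summable (fun j : ℕ => Real.exp (0:ℝ) * ρ ^ j) :=
    (summable_geometric_of_lt_one hρ0.le hρ1).mul_left _
  have hKpos : (0:ℝ) < K := by
    have : 0 < K := by omega
    exact_mod_cast this
  have hKq : (0:ℝ) < (K:ℝ) ^ (1 - q) := Real.rpow_pos_of_pos hKpos _
  have key : ∀ n ∈ Finset.Icc K (N - 1),
      P {ω | ∃ s : ℕ, 1 ≤ s ∧ (∑ t ∈ Finset.range s, X t ω) / s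
          + Real.sqrt (2 * Real.log (n / (K : ℝ) ^ (1 - q)) / s) ≤ μ - ε}
        ≤ ENNReal.ofReal (C0 * ε⁻¹ ^ 2 * ((K : ℝ) ^ (1 - q) / n)) := by
    intro n hn
    rw [Finset.mem_Icc] at hn
    have hnK : K ≤ n := hn.1
    have hn0 : (0:ℝ) < n := by
      have : 0 < n := by omega
      exact_mod_cast this
    set b : ℝ := Real.log (n / (K:ℝ) ^ (1 - q)) with hbdef
    have hb0 : 0 ≤ b := by
      apply Real.log_nonneg
      rw [le_div_iff₀ hKq, one_mul]
      calc (K:ℝ) ^ (1 - q) ≤ (K:ℝ) ^ (1:ℝ) := by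
            apply Real.rpow_le_rpow_of_exponent_le
            · exact_mod_cast (by omega : 1 ≤ K)
            · linarith
        _ = K := Real.rpow_one _
        _ ≤ n := by exact_mod_cast hnK
    have hexpb : Real.exp (-b) = (K:ℝ) ^ (1 - q) / n := by
      rw [hbdef, ← Real.log_inv, Real.exp_log (by positivity), inv_div]
    have hcher : ∀ s : ℕ, 1 ≤ s →
        P {ω | (∑ t ∈ Finset.range s, X t ω) ≤ (μ - ε - Real.sqrt (2 * b / s)) * s}
          ≤ ENNReal.ofReal (Real.exp (-b) * ρ ^ s) := by
      intro s hs
      have hs0 : (0:ℝ) < s := by exact_mod_cast hs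
      set r : ℝ := Real.sqrt (2 * b / s) with hrdef
      have hr0 : 0 ≤ r := Real.sqrt_nonneg _
      have hr2 : r ^ 2 = 2 * b / s := Real.sq_sqrt (by positivity)
      set u : ℝ := -(ε + r) with hudef
      have hu : u ≤ 0 := by rw [hudef]; linarith
      have hint : Integrable (fun ω => Real.exp (u * (∑ t ∈ Finset.range s, X t) ω)) P :=
        hindep.integrable_exp_mul_sum hmeas
          (fun i _ => integrable_exp_gaussian P (X i) (hmeas i) μ (hdist i) u)
      have hmgf : mgf (∑ t ∈ Finset.range s, X t) P u
          = Real.exp (s * (μ * u + u ^ 2 / 2)) := by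
        rw [hindep.mgf_sum hmeas]
        have heach : ∀ i ∈ Finset.range s, mgf (X i) P u = Real.exp (μ * u + u ^ 2 / 2) :=
          fun i _ => mgf_gaussian' P (X i) (hmeas i) μ (hdist i) u
        rw [Finset.prod_congr rfl heach, Finset.prod_const, Finset.card_range,
          ← Real.exp_nat_mul]
      have hch := measure_le_le_exp_mul_mgf (X := ∑ t ∈ Finset.range s, X t)
        ((μ - ε - r) * s) hu hint
      rw [hmgf] at hch
      have hset : {ω | (∑ t ∈ Finset.range s, X t ω) ≤ (μ - ε - r) * s}
          = {ω | (∑ t ∈ Finset.range s, X t) ω ≤ (μ - ε - r) * s} := by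
        ext ω; simp [Finset.sum_apply]
      rw [ENNReal.le_ofReal_iff_toReal_le (measure_ne_top P _) (by positivity), hset]
      refine hch.trans ?_
      rw [← Real.exp_add]
      have hρs : Real.exp (-b) * ρ ^ s = Real.exp (-b + s * (-ε ^ 2 / 2)) := by
        rw [hρdef, ← Real.exp_nat_mul, ← Real.exp_add]
      rw [hρs]
      apply Real.exp_le_exp.mpr
      have hcross : 0 ≤ (s:ℝ) * ε * r := by positivity
      have hsr : (s:ℝ) * r ^ 2 = 2 * b := by
        rw [hr2]; field_simp
      rw [hudef]
      nlinarith [hsr, hcross]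
    have hunion : {ω | ∃ s : ℕ, 1 ≤ s ∧ (∑ t ∈ Finset.range s, X t ω) / s
          + Real.sqrt (2 * b / s) ≤ μ - ε}
        ⊆ ⋃ j : ℕ, {ω | (∑ t ∈ Finset.range (j+1), X t ω)
          ≤ (μ - ε - Real.sqrt (2 * b / (j+1))) * (j+1)} := by
      intro ω hω
      obtain ⟨s, hs1, hs⟩ := hω
      refine Set.mem_iUnion.mpr ⟨s - 1, ?_⟩
      have hss : s - 1 + 1 = s := by omega
      rw [hss]
      simp only [Set.mem_setOf_eq]
      have hs0 : (0:ℝ) < s := by exact_mod_cast hs1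
      rw [← le_sub_iff_add_le, div_le_iff₀ hs0] at hs
      have hcast1 : ((s - 1 : ℕ) : ℝ) + 1 = (s : ℝ) := by
        rw [Nat.cast_sub hs1]
        simp
      rw [hcast1]
      exact hs
    refine le_trans (measure_mono hunion) ?_
    refine le_trans (measure_iUnion_le _) ?_
    have hsumb : ∀ j : ℕ, P {ω | (∑ t ∈ Finset.range (j+1), X t ω)
          ≤ (μ - ε - Real.sqrt (2 * b / (j+1))) * (j+1)}
        ≤ ENNReal.ofReal (Real.exp (-b) * ρ ^ (j+1)) := by
      intro j
      have h := hcher (j+1) (by omega)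
      push_cast at h
      exact h
    refine le_trans (ENNReal.tsum_le_tsum hsumb) ?_
    have hterm : ∀ j : ℕ, Real.exp (-b) * ρ ^ (j+1) = (Real.exp (-b) * ρ) * ρ ^ j := by
      intro j; rw [pow_succ]; ring
    have hsummable : Summable (fun j : ℕ => Real.exp (-b) * ρ ^ (j+1)) := by
      apply Summable.congr ((summable_geometric_of_lt_one hρ0.le hρ1).mul_left
        (Real.exp (-b) * ρ))
      intro j; rw [hterm j]
    rw [← ENNReal.ofReal_tsum_of_nonneg (fun j => by positivity) hsummable]
    apply ENNReal.ofReal_le_ofReal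
    have htsum : ∑' j : ℕ, Real.exp (-b) * ρ ^ (j+1)
        = Real.exp (-b) * (ρ / (1 - ρ)) := by
      rw [tsum_congr hterm, tsum_mul_left, tsum_geometric_of_lt_one hρ0.le hρ1]
      rw [div_eq_mul_inv, mul_assoc]
    rw [htsum, hexpb]
    calc (K:ℝ) ^ (1-q) / n * (ρ / (1 - ρ)) ≤ (K:ℝ) ^ (1-q) / n * (C0 * ε⁻¹ ^ 2) :=
          mul_le_mul_of_nonneg_left hρdiv (by positivity)
      _ = C0 * ε⁻¹ ^ 2 * ((K:ℝ) ^ (1-q) / n) := by ring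
  calc ∑ n ∈ Finset.Icc K (N - 1),
        P {ω | ∃ s : ℕ, 1 ≤ s ∧ (∑ t ∈ Finset.range s, X t ω) / s
          + Real.sqrt (2 * Real.log (n / (K : ℝ) ^ (1 - q)) / s) ≤ μ - ε}
      ≤ ∑ n ∈ Finset.Icc K (N - 1),
          ENNReal.ofReal (C0 * ε⁻¹ ^ 2 * ((K : ℝ) ^ (1 - q) / n)) :=
        Finset.sum_le_sum key
    _ = ENNReal.ofReal (∑ n ∈ Finset.Icc K (N - 1),
          C0 * ε⁻¹ ^ 2 * ((K : ℝ) ^ (1 - q) / n)) :=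
        (ENNReal.ofReal_sum_of_nonneg (fun n _ => by positivity)).symm
    _ ≤ ENNReal.ofReal (2 * C0 * ε⁻¹ ^ 2 * (K : ℝ) ^ (1 - q) * Real.log N) := by
        apply ENNReal.ofReal_le_ofReal
        have hsplit : ∑ n ∈ Finset.Icc K (N - 1), C0 * ε⁻¹ ^ 2 * ((K : ℝ) ^ (1 - q) / n)
            = (C0 * ε⁻¹ ^ 2 * (K : ℝ) ^ (1 - q)) * ∑ n ∈ Finset.Icc K (N - 1), (1:ℝ) / n := by
          rw [Finset.mul_sum]
          apply Finset.sum_congr rfl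
          intro n _
          ring
        rw [hsplit]
        have hharm : ∑ n ∈ Finset.Icc K (N - 1), (1:ℝ) / n ≤ Real.log (N - 1 : ℕ) :=
          harmonic_le hK2 (N - 1) (by omega)
        have hcast : ((N - 1 : ℕ) : ℝ) ≤ (N : ℝ) := by
          exact_mod_cast Nat.sub_le N 1
        have hN1 : (0:ℝ) < ((N - 1 : ℕ) : ℝ) := by
          have : 0 < N - 1 := by omega
          exact_mod_cast this
        have hlog : Real.log ((N - 1 : ℕ) : ℝ) ≤ Real.log N :=
          Real.log_le_log hN1 hcast
        have hlogN : 0 ≤ Real.log N := by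
          apply Real.log_nonneg
          exact_mod_cast (by omega : 1 ≤ N)
        have hS : ∑ n ∈ Finset.Icc K (N - 1), (1:ℝ) / n ≤ Real.log N := hharm.trans hlog
        have ha : 0 ≤ C0 * ε⁻¹ ^ 2 * (K : ℝ) ^ (1 - q) := by positivity
        nlinarith [mul_le_mul_of_nonneg_left hS ha]
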